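/- arXiv:1303.2192 — 7 statements merged into one kernel-verified Lean document; each statement's English description precedes it below -/
import Mathlib

section
/- Let A, J : (Fin 4 → ℝ) → (Fin 4 → ℝ) be smooth. Write ∂_μA_ν(x) for the ν-component of the derivative of A at x in the direction of the μ-th standard basis vector, F_{μν}(x) := ∂_μA_ν(x) − ∂_νA_μ(x), and F^{μν}(x) := Σ_{λ,σ} η(μ,λ)η(ν,σ)F_{λσ}(x). Define the Lagrangian 𝓛 : (Fin 4 → ℝ) × (Fin 4 → ℝ) × (Fin 4 → Fin 4 → ℝ) → ℝ by 𝓛(x,a,v) := −(1/4)Σ η(μ,λ)η(ν,σ)(v(μ,ν)−v(ν,μ))(v(λ,σ)−v(σ,λ)) − Σ_ρ J(x)(ρ)·a(ρ). Then A satisfies the Euler–Lagrange equations for 𝓛, namely for all x and all ν ∈ Fin 4: (∂𝓛/∂a_ν)(x, A(x), ∂A(x)) = Σ_μ (∂/∂x^μ)[ y ↦ (∂𝓛/∂v(μ,ν))(y, A(y), ∂A(y)) ](x), if and only if the Maxwell equations with source hold: Σ_μ ∂_μ F^{μν}(x) = J(x)(ν) for all x and ν. -/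
noncomputable section

/-- The Minkowski metric on `Fin 4`. -/
def eta (μ ν : Fin 4) : ℝ := if μ = ν then (if μ = 0 then 1 else -1) else 0

/-- `∂_μ A_ν (x)`: the `ν`-component of the derivative of `A` at `x` in the direction of
the `μ`-th standard basis vector. -/
def pd (A : (Fin 4 → ℝ) → (Fin 4 → ℝ)) (x : Fin 4 → ℝ) (μ ν : Fin 4) : ℝ :=
  fderiv ℝ A x (Pi.single μ 1) ν

/-- The raised field strength `F^{μν}(x) = Σ η(μ,λ)η(ν,σ)(∂_λA_σ − ∂_σA_λ)(x)`. -/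
def Fup (A : (Fin 4 → ℝ) → (Fin 4 → ℝ)) (μ ν : Fin 4) (x : Fin 4 → ℝ) : ℝ :=
  ∑ lam : Fin 4, ∑ σ : Fin 4, eta μ lam * eta ν σ * (pd A x lam σ - pd A x σ lam)

/-- The Maxwell Lagrangian with source `J`:
`𝓛(x,a,v) = −(1/4) Σ η η (v(μ,ν)−v(ν,μ))(v(λ,σ)−v(σ,λ)) − Σ_ρ J(x)(ρ)·a(ρ)`. -/
def Lag (J : (Fin 4 → ℝ) → (Fin 4 → ℝ))
    (p : (Fin 4 → ℝ) × (Fin 4 → ℝ) × (Fin 4 → Fin 4 → ℝ)) : ℝ :=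
  -(1/4) * (∑ μ : Fin 4, ∑ ν : Fin 4, ∑ lam : Fin 4, ∑ σ : Fin 4,
      eta μ lam * eta ν σ * (p.2.2 μ ν - p.2.2 ν μ) * (p.2.2 lam σ - p.2.2 σ lam))
    - ∑ ρ : Fin 4, J p.1 ρ * p.2.1 ρ

abbrev Pt := (Fin 4 → ℝ) × (Fin 4 → ℝ) × (Fin 4 → Fin 4 → ℝ)

/-- Coordinate `v (μ, ν)` as a continuous linear map. -/
def Vc (μ ν : Fin 4) : Pt →L[ℝ] ℝ :=
  (ContinuousLinearMap.proj ν).comp ((ContinuousLinearMap.proj μ).comp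
    ((ContinuousLinearMap.snd ℝ (Fin 4 → ℝ) (Fin 4 → Fin 4 → ℝ)).comp
      (ContinuousLinearMap.snd ℝ (Fin 4 → ℝ) ((Fin 4 → ℝ) × (Fin 4 → Fin 4 → ℝ)))))

/-- Coordinate `a ρ` as a continuous linear map. -/
def Ac (ρ : Fin 4) : Pt →L[ℝ] ℝ :=
  (ContinuousLinearMap.proj ρ).comp
    ((ContinuousLinearMap.fst ℝ (Fin 4 → ℝ) (Fin 4 → Fin 4 → ℝ)).comp
      (ContinuousLinearMap.snd ℝ (Fin 4 → ℝ) ((Fin 4 → ℝ) × (Fin 4 → Fin 4 → ℝ))))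

/-- Explicit Fréchet derivative of the Lagrangian. -/
def DLag (J : (Fin 4 → ℝ) → (Fin 4 → ℝ)) (p : Pt) : Pt →L[ℝ] ℝ :=
  (-(1/4 : ℝ)) • (∑ μ : Fin 4, ∑ ν : Fin 4, ∑ lam : Fin 4, ∑ σ : Fin 4,
      ((eta μ lam * eta ν σ * (p.2.2 μ ν - p.2.2 ν μ)) • (Vc lam σ - Vc σ lam)
        + (p.2.2 lam σ - p.2.2 σ lam) • ((eta μ lam * eta ν σ) • (Vc μ ν - Vc ν μ))))
    - ∑ ρ : Fin 4, (J p.1 ρ • Ac ρ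
        + p.2.1 ρ • (((ContinuousLinearMap.proj ρ).comp (fderiv ℝ J p.1)).comp
            (ContinuousLinearMap.fst ℝ (Fin 4 → ℝ) ((Fin 4 → ℝ) × (Fin 4 → Fin 4 → ℝ)))))

lemma hasFDerivAt_Lag (J : (Fin 4 → ℝ) → (Fin 4 → ℝ)) (hJ : ContDiff ℝ (⊤ : ℕ∞) J) (p : Pt) :
    HasFDerivAt (Lag J) (DLag J p) p := by
  have hV : ∀ μ ν : Fin 4, HasFDerivAt (fun q : Pt => q.2.2 μ ν) (Vc μ ν) p :=
    fun μ ν => (Vc μ ν).hasFDerivAt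
  have hF : ∀ μ ν : Fin 4, HasFDerivAt (fun q : Pt => q.2.2 μ ν - q.2.2 ν μ)
      (Vc μ ν - Vc ν μ) p := fun μ ν => (hV μ ν).sub (hV ν μ)
  have hAc : ∀ ρ : Fin 4, HasFDerivAt (fun q : Pt => q.2.1 ρ) (Ac ρ) p :=
    fun ρ => (Ac ρ).hasFDerivAt
  have hJ1 : ∀ ρ : Fin 4, HasFDerivAt (fun q : Pt => J q.1 ρ)
      (((ContinuousLinearMap.proj ρ).comp (fderiv ℝ J p.1)).comp
        (ContinuousLinearMap.fst ℝ (Fin 4 → ℝ) ((Fin 4 → ℝ) × (Fin 4 → Fin 4 → ℝ)))) p := by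
    intro ρ
    have h2 : HasFDerivAt J (fderiv ℝ J p.1) p.1 := (hJ.differentiable (by simp) p.1).hasFDerivAt
    have h3 := (ContinuousLinearMap.proj (R := ℝ) (φ := fun _ : Fin 4 => ℝ) ρ).hasFDerivAt
      (x := J p.1)
    exact (h3.comp p.1 h2).comp p hasFDerivAt_fst
  have hQ : HasFDerivAt (fun q : Pt => ∑ μ : Fin 4, ∑ ν : Fin 4, ∑ lam : Fin 4, ∑ σ : Fin 4,
      eta μ lam * eta ν σ * (q.2.2 μ ν - q.2.2 ν μ) * (q.2.2 lam σ - q.2.2 σ lam))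
      (∑ μ : Fin 4, ∑ ν : Fin 4, ∑ lam : Fin 4, ∑ σ : Fin 4,
        ((eta μ lam * eta ν σ * (p.2.2 μ ν - p.2.2 ν μ)) • (Vc lam σ - Vc σ lam)
          + (p.2.2 lam σ - p.2.2 σ lam) • ((eta μ lam * eta ν σ) • (Vc μ ν - Vc ν μ)))) p := by
    apply HasFDerivAt.fun_sum; intro μ _
    apply HasFDerivAt.fun_sum; intro ν _
    apply HasFDerivAt.fun_sum; intro lam _
    apply HasFDerivAt.fun_sum; intro σ _
    exact ((hF μ ν).const_mul _).mul (hF lam σ)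
  have hS : HasFDerivAt (fun q : Pt => ∑ ρ : Fin 4, J q.1 ρ * q.2.1 ρ)
      (∑ ρ : Fin 4, (J p.1 ρ • Ac ρ
        + p.2.1 ρ • (((ContinuousLinearMap.proj ρ).comp (fderiv ℝ J p.1)).comp
            (ContinuousLinearMap.fst ℝ (Fin 4 → ℝ) ((Fin 4 → ℝ) × (Fin 4 → Fin 4 → ℝ)))))) p := by
    apply HasFDerivAt.fun_sum; intro ρ _
    exact (hJ1 ρ).mul (hAc ρ)
  exact (hQ.const_mul (-(1/4))).sub hS

lemma fderiv_Lag_a (J : (Fin 4 → ℝ) → (Fin 4 → ℝ)) (hJ : ContDiff ℝ (⊤ : ℕ∞) J) (x a : Fin 4 → ℝ)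
    (v : Fin 4 → Fin 4 → ℝ) (ν : Fin 4) :
    fderiv ℝ (Lag J) (x, a, v) ((0 : Fin 4 → ℝ), Pi.single ν (1:ℝ), (0 : Fin 4 → Fin 4 → ℝ))
      = -(J x ν) := by
  rw [(hasFDerivAt_Lag J hJ (x, a, v)).fderiv]
  simp [DLag, Vc, Ac, Pi.single_apply]

set_option maxHeartbeats 1000000 in
lemma fderiv_Lag_v (J : (Fin 4 → ℝ) → (Fin 4 → ℝ)) (hJ : ContDiff ℝ (⊤ : ℕ∞) J) (x a : Fin 4 → ℝ)
    (v : Fin 4 → Fin 4 → ℝ) (μ ν : Fin 4) :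
    fderiv ℝ (Lag J) (x, a, v)
      ((0 : Fin 4 → ℝ), (0 : Fin 4 → ℝ), Pi.single μ (Pi.single ν (1:ℝ)))
      = -(∑ lam : Fin 4, ∑ σ : Fin 4, eta μ lam * eta ν σ * (v lam σ - v σ lam)) := by
  rw [(hasFDerivAt_Lag J hJ (x, a, v)).fderiv]
  simp [DLag, Vc, Ac, Pi.single_apply]
  fin_cases μ <;> fin_cases ν <;> (simp [Fin.sum_univ_four, eta, Pi.single_apply]; try ring)

/-- `A` satisfies the Euler–Lagrange equations for the Maxwell Lagrangian `𝓛` with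
source `J` if and only if the Maxwell equations with source hold:
`Σ_μ ∂_μ F^{μν}(x) = J(x)(ν)`. -/
theorem euler_lagrange_iff_maxwell (A J : (Fin 4 → ℝ) → (Fin 4 → ℝ))
    (hA : ContDiff ℝ (⊤ : ℕ∞) A) (hJ : ContDiff ℝ (⊤ : ℕ∞) J) :
    (∀ (x : Fin 4 → ℝ) (ν : Fin 4),
        fderiv ℝ (Lag J) (x, A x, fun μ' ν' => pd A x μ' ν')
            ((0 : Fin 4 → ℝ), Pi.single ν (1 : ℝ), (0 : Fin 4 → Fin 4 → ℝ)) =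
          ∑ μ : Fin 4,
            fderiv ℝ
              (fun y => fderiv ℝ (Lag J) (y, A y, fun μ' ν' => pd A y μ' ν')
                ((0 : Fin 4 → ℝ), (0 : Fin 4 → ℝ), Pi.single μ (Pi.single ν (1 : ℝ))))
              x (Pi.single μ 1)) ↔
      (∀ (x : Fin 4 → ℝ) (ν : Fin 4),
        (∑ μ : Fin 4, fderiv ℝ (Fup A μ ν) x (Pi.single μ 1)) = J x ν) := by
  apply forall₂_congr
  intro x ν
  rw [fderiv_Lag_a J hJ x (A x) (fun μ' ν' => pd A x μ' ν') ν]
  have h2 : ∀ μ : Fin 4,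
      (fun y => fderiv ℝ (Lag J) (y, A y, fun μ' ν' => pd A y μ' ν')
          ((0 : Fin 4 → ℝ), (0 : Fin 4 → ℝ), Pi.single μ (Pi.single ν (1 : ℝ))))
        = fun y => -(Fup A μ ν y) := by
    intro μ
    funext y
    rw [fderiv_Lag_v J hJ y (A y) (fun μ' ν' => pd A y μ' ν') μ ν]
    rfl
  simp only [h2, fderiv_fun_neg, ContinuousLinearMap.neg_apply]
  rw [Finset.sum_neg_distrib, neg_inj, eq_comm]
end
end

section
/- Let ψ, ψ̃ : (Fin 4 → ℝ) → (Fin 4 → Fin 4 → ℝ) be differentiable with antisymmetric values, and φ, φ̃ : (Fin 4 → ℝ) → (Fin 4 → ℝ) be differentiable. Fix a point (x, A, 𝔢, Π) of the DeDonder–Weyl phase space W and define the tangent vectors Ξ_P := (0, φ(x), −Σ_{μ,ν} ∂_ν φ_μ(x)·Π(μ,ν), 0), Ξ_{P̃} analogously for φ̃, Ξ_Q := (0, 0, −Σ_{μ,ν} A(μ)·∂_ν ψ^{μν}(x), −ψ(x)), and Ξ_{Q̃} analogously for ψ̃ (these are the infinitesimal symplectomorphisms associated to the algebraic observable 3-forms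 P_φ = φ_μ Π^{A_μν} dy_ν and Q^ψ = ψ^{μν} A_μ dy_ν). Then for all w₁, w₂, w₃ ∈ W: (i) Ω(Ξ_Q, Ξ_{Q̃}, w₁, w₂, w₃) = 0; (ii) Ω(Ξ_P, Ξ_{P̃}, w₁, w₂, w₃) = 0; (iii) Ω(Ξ_Q, Ξ_P, w₁, w₂, w₃) = −Σ_{μ,ν} ψ^{μν}(x)·φ_μ(x)·dy_ν(p(w₁), p(w₂), p(w₃)), where p : W → (Fin 4 → ℝ) is the projection onto the x-component. (These are the canonical Poisson brackets {Q^ψ, Q^{ψ̃}} = 0, {P_φ, P_{φ̃}} = 0, {Q^ψ, P_φ} = −ψ^{μν}φ_μ dy_ν of 4D Maxwell theory.) -/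
noncomputable section

/-- The DeDonder–Weyl phase space for 4D Maxwell theory, with points `(x, A, 𝔢, Π)`. -/
abbrev W : Type := (Fin 4 → ℝ) × (Fin 4 → ℝ) × ℝ × (Fin 4 → Fin 4 → ℝ)

/-- The coordinate 1-form `dA_μ` on `W`. -/
def dAW (μ : Fin 4) (w : W) : ℝ := w.2.1 μ

/-- The coordinate 1-form `d𝔢` on `W`. -/
def deW (w : W) : ℝ := w.2.2.1

/-- The coordinate 1-form `dΠ^{μν}` on `W`. -/
def dPW (μ ν : Fin 4) (w : W) : ℝ := w.2.2.2 μ ν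

/-- The `x`-coordinate direction `∂_ν` in `W`. -/
def EW (ν : Fin 4) : W := (Pi.single ν 1, 0, 0, 0)

/-- The 4-form `dy = dx⁰∧dx¹∧dx²∧dx³` on `W`. -/
def dyW (v0 v1 v2 v3 : W) : ℝ :=
  Matrix.det (Matrix.of fun i j : Fin 4 => (![v0, v1, v2, v3] j).1 i)

/-- `dy_ν = ∂_ν ⌟ dy` on `W`. -/
def dycW (ν : Fin 4) (v1 v2 v3 : W) : ℝ := dyW (EW ν) v1 v2 v3

/-- Wedge of a 1-form with a 3-form on `W`. -/
def wedge13W (α : W → ℝ) (ω : W → W → W → ℝ) (v0 v1 v2 v3 : W) : ℝ :=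
  α v0 * ω v1 v2 v3 - α v1 * ω v0 v2 v3 + α v2 * ω v0 v1 v3 - α v3 * ω v0 v1 v2

/-- Wedge of a 1-form with a 4-form on `W`. -/
def wedge14W (α : W → ℝ) (ω : W → W → W → W → ℝ) (v0 v1 v2 v3 v4 : W) : ℝ :=
  α v0 * ω v1 v2 v3 v4 - α v1 * ω v0 v2 v3 v4 + α v2 * ω v0 v1 v3 v4
    - α v3 * ω v0 v1 v2 v4 + α v4 * ω v0 v1 v2 v3

/-- The DeDonder–Weyl multisymplectic 5-form
`Ω = d𝔢∧dy + Σ_{μ,ν} dΠ^{μν}∧dA_μ∧dy_ν`. -/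
def Omega (v0 v1 v2 v3 v4 : W) : ℝ :=
  wedge14W deW dyW v0 v1 v2 v3 v4 +
    ∑ μ : Fin 4, ∑ ν : Fin 4,
      wedge14W (dPW μ ν) (wedge13W (dAW μ) (dycW ν)) v0 v1 v2 v3 v4

/-- The 4-form `dy` on the base `ℝ⁴`. -/
def dyR (v0 v1 v2 v3 : Fin 4 → ℝ) : ℝ :=
  Matrix.det (Matrix.of fun i j : Fin 4 => (![v0, v1, v2, v3] j) i)

/-- `dy_ν = ∂_ν ⌟ dy` on the base `ℝ⁴`. -/
def dyRc (ν : Fin 4) (v1 v2 v3 : Fin 4 → ℝ) : ℝ := dyR (Pi.single ν 1) v1 v2 v3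

/-- The infinitesimal symplectomorphism `Ξ_P = (0, φ(x), −Σ ∂_νφ_μ(x)·Π(μ,ν), 0)`
associated to the algebraic observable 3-form `P_φ = φ_μ Π^{A_μν} dy_ν`. -/
def XiP (φ : (Fin 4 → ℝ) → Fin 4 → ℝ) (x : Fin 4 → ℝ) (P : Fin 4 → Fin 4 → ℝ) : W :=
  ((0 : Fin 4 → ℝ), φ x,
    -(∑ μ : Fin 4, ∑ ν : Fin 4, fderiv ℝ φ x (Pi.single ν 1) μ * P μ ν),
    (0 : Fin 4 → Fin 4 → ℝ))

/-- The infinitesimal symplectomorphism `Ξ_Q = (0, 0, −Σ A(μ)·∂_νψ^{μν}(x), −ψ(x))`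
associated to the algebraic observable 3-form `Q^ψ = ψ^{μν} A_μ dy_ν`. -/
def XiQ (ψ : (Fin 4 → ℝ) → Fin 4 → Fin 4 → ℝ) (x A : Fin 4 → ℝ) : W :=
  ((0 : Fin 4 → ℝ), (0 : Fin 4 → ℝ),
    -(∑ μ : Fin 4, ∑ ν : Fin 4, A μ * fderiv ℝ ψ x (Pi.single ν 1) μ ν),
    fun μ ν => -(ψ x μ ν))

lemma dyW_z0 {v0 : W} (h : v0.1 = 0) (v1 v2 v3 : W) : dyW v0 v1 v2 v3 = 0 := by
  unfold dyW
  exact Matrix.det_eq_zero_of_column_eq_zero 0 (fun i => by simp [h])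

lemma dyW_z1 {v1 : W} (h : v1.1 = 0) (v0 v2 v3 : W) : dyW v0 v1 v2 v3 = 0 := by
  unfold dyW
  exact Matrix.det_eq_zero_of_column_eq_zero 1 (fun i => by simp [h])

lemma dycW_z1 {v1 : W} (h : v1.1 = 0) (ν : Fin 4) (v2 v3 : W) : dycW ν v1 v2 v3 = 0 := by
  unfold dycW dyW
  exact Matrix.det_eq_zero_of_column_eq_zero 1 (fun i => by simp [h])

lemma dycW_z2 {v2 : W} (h : v2.1 = 0) (ν : Fin 4) (v1 v3 : W) : dycW ν v1 v2 v3 = 0 := by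
  unfold dycW dyW
  exact Matrix.det_eq_zero_of_column_eq_zero 2 (fun i => by simp [h])

lemma dycW_z3 {v3 : W} (h : v3.1 = 0) (ν : Fin 4) (v1 v2 : W) : dycW ν v1 v2 v3 = 0 := by
  unfold dycW dyW
  exact Matrix.det_eq_zero_of_column_eq_zero 3 (fun i => by simp [h])

lemma dycW_eq (ν : Fin 4) (w1 w2 w3 : W) :
    dycW ν w1 w2 w3 = dyRc ν w1.1 w2.1 w3.1 := by
  unfold dycW dyW dyRc dyR EW
  congr 1
  ext i j
  fin_cases j <;> rfl

lemma Omega_xzero {v0 v1 : W} (h0 : v0.1 = 0) (h1 : v1.1 = 0) (w1 w2 w3 : W) :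
    Omega v0 v1 w1 w2 w3 =
      ∑ μ : Fin 4, ∑ ν : Fin 4,
        (dPW μ ν v0 * dAW μ v1 - dPW μ ν v1 * dAW μ v0) * dycW ν w1 w2 w3 := by
  unfold Omega wedge14W wedge13W
  simp only [dyW_z0 h0, dyW_z0 h1, dyW_z1 h1, dycW_z1 h0, dycW_z1 h1, dycW_z2 h0, dycW_z2 h1,
    dycW_z3 h0, dycW_z3 h1, mul_zero, zero_mul, add_zero, sub_zero, zero_add, zero_sub,
    neg_zero, sub_self]
  exact Finset.sum_congr rfl fun μ _ => Finset.sum_congr rfl fun ν _ => by ring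

/-- The canonical Poisson brackets of 4D Maxwell theory:
`{Q^ψ, Q^{ψ̃}} = 0`, `{P_φ, P_{φ̃}} = 0` and `{Q^ψ, P_φ} = −ψ^{μν}φ_μ dy_ν`. -/
theorem canonical_poisson_brackets (ψ ψ' : (Fin 4 → ℝ) → Fin 4 → Fin 4 → ℝ)
    (φ φ' : (Fin 4 → ℝ) → Fin 4 → ℝ)
    (hψ : Differentiable ℝ ψ) (hψ' : Differentiable ℝ ψ')
    (hφ : Differentiable ℝ φ) (hφ' : Differentiable ℝ φ')
    (hψa : ∀ x μ ν, ψ x μ ν = -ψ x ν μ) (hψ'a : ∀ x μ ν, ψ' x μ ν = -ψ' x ν μ)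
    (x A : Fin 4 → ℝ) (e : ℝ) (P : Fin 4 → Fin 4 → ℝ) :
    (∀ w1 w2 w3 : W, Omega (XiQ ψ x A) (XiQ ψ' x A) w1 w2 w3 = 0) ∧
    (∀ w1 w2 w3 : W, Omega (XiP φ x P) (XiP φ' x P) w1 w2 w3 = 0) ∧
    (∀ w1 w2 w3 : W, Omega (XiQ ψ x A) (XiP φ x P) w1 w2 w3 =
      -∑ μ : Fin 4, ∑ ν : Fin 4, ψ x μ ν * φ x μ * dyRc ν w1.1 w2.1 w3.1) := by
  refine ⟨fun w1 w2 w3 => ?_, fun w1 w2 w3 => ?_, fun w1 w2 w3 => ?_⟩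
  · rw [Omega_xzero rfl rfl]
    simp [XiQ, dAW]
  · rw [Omega_xzero rfl rfl]
    simp [XiP, dPW]
  · rw [Omega_xzero rfl rfl]
    rw [show -(∑ μ : Fin 4, ∑ ν : Fin 4, ψ x μ ν * φ x μ * dyRc ν w1.1 w2.1 w3.1)
        = ∑ μ : Fin 4, ∑ ν : Fin 4, -(ψ x μ ν * φ x μ * dyRc ν w1.1 w2.1 w3.1) by
      simp [Finset.sum_neg_distrib]]
    refine Finset.sum_congr rfl fun μ _ => Finset.sum_congr rfl fun ν _ => ?_
    rw [dycW_eq]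
    simp only [XiQ, XiP, dPW, dAW, Pi.zero_apply, zero_mul, mul_zero, sub_zero]
    ring
end
end

section
/- Let ς ∈ ℝ with ς ≠ 0 and ς ≠ 2, and let π¹¹, π¹², π²¹, π²² ∈ ℝ (standing for π^{A₁1}, π^{A₁2}, π^{A₂1}, π^{A₂2}). Then real numbers v₁₁, v₁₂, v₂₁, v₂₂ (standing for ∂₁A₁, ∂₁A₂, ∂₂A₁, ∂₂A₂) satisfy the Legendre system: 0 = π¹¹ + ς·v₂₂; v₁₂ − v₂₁ = π²¹ − ς·v₂₁; v₂₁ − v₁₂ = π¹² − ς·v₁₂; 0 = π²² + ς·v₁₁, if and only if: v₂₂ = −π¹¹/ς; v₂₁ = (π¹² + (1−ς)·π²¹)/(ς·(2−ς)); v₁₂ = (π²¹ + (1−ς)·π¹²)/(ς·(2−ς)); v₁₁ = −π²²/ς. In particular, for ς ∉ {0,2} the two-dimensional Lepage–Dedecker Legendre correspondence of Maxwell theory is uniquely invertible. -/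
/-- For `ς ∉ {0,2}` the two-dimensional Lepage–Dedecker Legendre correspondence of
Maxwell theory is uniquely invertible: the Legendre system relating the velocities
`v_{μν} = ∂_μA_ν` to the momenta `π^{A_μν}` holds if and only if the velocities are
given by the explicit inverse formulas. -/
theorem legendre_2d_invertible (s : ℝ) (hs0 : s ≠ 0) (hs2 : s ≠ 2)
    (p11 p12 p21 p22 v11 v12 v21 v22 : ℝ) :
    ((0 : ℝ) = p11 + s * v22 ∧
      v12 - v21 = p21 - s * v21 ∧
      v21 - v12 = p12 - s * v12 ∧
      (0 : ℝ) = p22 + s * v11) ↔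
    (v22 = -p11 / s ∧
      v21 = (p12 + (1 - s) * p21) / (s * (2 - s)) ∧
      v12 = (p21 + (1 - s) * p12) / (s * (2 - s)) ∧
      v11 = -p22 / s) := by
  have h2 : (2 : ℝ) - s ≠ 0 := sub_ne_zero.mpr (Ne.symm hs2)
  constructor
  · rintro ⟨h1, h2', h3, h4⟩
    refine ⟨?_, ?_, ?_, ?_⟩ <;> field_simp
    · linarith
    · linear_combination h3 + (1 - s) * h2'
    · linear_combination h2' + (1 - s) * h3
    · linarith
  · rintro ⟨h1, h2', h3, h4⟩
    subst h1 h2' h3 h4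
    refine ⟨?_, ?_, ?_, ?_⟩ <;> field_simp <;> ring
end

section
/- Let ς, π¹¹, π¹², π²¹, π²² ∈ ℝ. There exist real numbers v₁₁, v₁₂, v₂₁, v₂₂ satisfying the two-dimensional Maxwell Legendre system: 0 = π¹¹ + ς·v₂₂; v₁₂ − v₂₁ = π²¹ − ς·v₂₁; v₂₁ − v₁₂ = π¹² − ς·v₁₂; 0 = π²² + ς·v₁₁, if and only if one of the following holds: (i) ς ≠ 0 and ς ≠ 2; or (ii) ς = 0 and π¹¹ = 0 and π²² = 0 and π¹² + π²¹ = 0; or (iii) ς = 2 and π¹² = π²¹. (This characterizes the union of the enlarged pseudofibers 𝒫_q of the two-dimensional Lepage–Dedecker Maxwell theory.) -/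
/-- Characterization of the union of the enlarged pseudofibers of the two-dimensional
Lepage–Dedecker Maxwell theory: the Legendre system is solvable for the velocities if
and only if `ς ∉ {0,2}`, or `ς = 0` with `π¹¹ = π²² = 0` and `π¹² + π²¹ = 0`, or
`ς = 2` with `π¹² = π²¹`. -/
theorem enlarged_pseudofibers_2d (s p11 p12 p21 p22 : ℝ) :
    (∃ v11 v12 v21 v22 : ℝ,
      (0 : ℝ) = p11 + s * v22 ∧
      v12 - v21 = p21 - s * v21 ∧
      v21 - v12 = p12 - s * v12 ∧
      (0 : ℝ) = p22 + s * v11) ↔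
    ((s ≠ 0 ∧ s ≠ 2) ∨
      (s = 0 ∧ p11 = 0 ∧ p22 = 0 ∧ p12 + p21 = 0) ∨
      (s = 2 ∧ p12 = p21)) := by
  constructor
  · rintro ⟨v11, v12, v21, v22, h1, h2, h3, h4⟩
    by_cases h0 : s = 0
    · subst h0
      right; left
      refine ⟨rfl, by linarith, by linarith, by linarith⟩
    · by_cases h2' : s = 2
      · subst h2'
        right; right
        exact ⟨rfl, by linarith⟩
      · exact Or.inl ⟨h0, h2'⟩
  · rintro (⟨h0, h2⟩ | ⟨h0, hp11, hp22, hp⟩ | ⟨h2, hp⟩)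
    · have hd : s * (2 - s) ≠ 0 := by
        have : (2 : ℝ) - s ≠ 0 := by
          intro h; apply h2; linarith
        exact mul_ne_zero h0 this
      refine ⟨-p22 / s, (p21 - (s - 1) * p12) / (s * (2 - s)),
        (p12 - (s - 1) * p21) / (s * (2 - s)), -p11 / s, ?_, ?_, ?_, ?_⟩
      · field_simp; ring
      · field_simp; ring
      · field_simp; ring
      · field_simp; ring
    · subst h0
      exact ⟨0, p21, 0, 0, by simp [hp11], by ring, by linarith, by simp [hp22]⟩
    · subst h2
      exact ⟨-p22 / 2, p21, 0, -p11 / 2, by ring, by ring, by rw [hp]; ring, by ring⟩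
end

section
/- Let ς ∈ ℝ with ς ≠ 0 and ς ≠ 2, let π¹¹, π¹², π²¹, π²² ∈ ℝ, and define v₂₂ := −π¹¹/ς, v₂₁ := (π¹² + (1−ς)π²¹)/(ς(2−ς)), v₁₂ := (π²¹ + (1−ς)π¹²)/(ς(2−ς)), v₁₁ := −π²²/ς (the inverse Legendre correspondence). Then (π¹¹·v₁₁ + π¹²·v₂₁ + π²¹·v₁₂ + π²²·v₂₂) + ς·(v₁₁·v₂₂ − v₁₂·v₂₁) − ½·(v₁₂ − v₂₁)² = −(1/ς)·π¹¹·π²² + (1/(2·ς·(2−ς)))·((π¹²)² + (π²¹)²) + ((ς−3)/(2−ς)² + 2/(ς·(2−ς)²))·π¹²·π²¹. (This is the general-ς Lepage–Dedecker Hamiltonian of two-dimensional Maxwell theory.) -/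
/-- The general-`ς` Lepage–Dedecker Hamiltonian of two-dimensional Maxwell theory:
`H = ⟨p,v⟩ − L(v)` evaluated on the inverse Legendre correspondence equals
`−(1/ς)π¹¹π²² + (1/(2ς(2−ς)))((π¹²)² + (π²¹)²) + ((ς−3)/(2−ς)² + 2/(ς(2−ς)²))π¹²π²¹`. -/
theorem hamiltonian_2d_general (s : ℝ) (hs0 : s ≠ 0) (hs2 : s ≠ 2)
    (p11 p12 p21 p22 v11 v12 v21 v22 : ℝ)
    (h22 : v22 = -p11 / s)
    (h21 : v21 = (p12 + (1 - s) * p21) / (s * (2 - s)))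
    (h12 : v12 = (p21 + (1 - s) * p12) / (s * (2 - s)))
    (h11 : v11 = -p22 / s) :
    (p11 * v11 + p12 * v21 + p21 * v12 + p22 * v22) + s * (v11 * v22 - v12 * v21)
        - (1/2) * (v12 - v21) ^ 2 =
      -(1/s) * (p11 * p22) + (1 / (2 * s * (2 - s))) * (p12 ^ 2 + p21 ^ 2) +
        ((s - 3) / (2 - s) ^ 2 + 2 / (s * (2 - s) ^ 2)) * (p12 * p21) := by
  subst h22 h21 h12 h11
  have h2 : (2:ℝ) - s ≠ 0 := sub_ne_zero.mpr (Ne.symm hs2)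
  field_simp
  ring
end

section
/- For ς ∈ ℝ, consider the linear Legendre map of two-dimensional Lepage–Dedecker Maxwell theory sending (v₁₁, v₁₂, v₂₁, v₂₂) to (π¹¹, π¹², π²¹, π²²) := (−ς·v₂₂, v₂₁ − (1−ς)·v₁₂, v₁₂ − (1−ς)·v₂₁, −ς·v₁₁), whose matrix with respect to these orderings is [[0,0,0,−ς],[0,−(1−ς),1,0],[0,1,−(1−ς),0],[−ς,0,0,0]]. The determinant of this matrix equals (2−ς)·ς³; in particular the map is bijective (the Legendre correspondence is non-degenerate) if and only if ς ≠ 0 and ς ≠ 2. -/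
/-! The Legendre map is `v ↦ legendreMatrix s *ᵥ v` once `ℝ × ℝ × ℝ × ℝ` is identified with
`Fin 4 → ℝ`, so it is bijective exactly when the determinant is nonzero; a Laplace expansion
gives the determinant `(2 - s) * s ^ 3`. -/

noncomputable section

/-- The matrix of the linear Legendre map of two-dimensional Lepage–Dedecker Maxwell
theory, sending `(v₁₁, v₁₂, v₂₁, v₂₂)` to `(π¹¹, π¹², π²¹, π²²)`. -/
def legendreMatrix (s : ℝ) : Matrix (Fin 4) (Fin 4) ℝ :=
  !![0, 0, 0, -s;
     0, -(1 - s), 1, 0;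
     0, 1, -(1 - s), 0;
     -s, 0, 0, 0]

theorem Matrix.mulVec_bijective_iff_isUnit_det {m R : Type*} [Fintype m] [DecidableEq m]
    [CommRing R] {A : Matrix m m R} : Function.Bijective A.mulVec ↔ IsUnit A.det := by
  rw [← isUnit_iff_isUnit_det]
  exact ⟨fun h => mulVec_surjective_iff_isUnit.1 h.2,
    fun h => ⟨mulVec_injective_of_isUnit h, mulVec_surjective_iff_isUnit.2 h⟩⟩

@[simps]
def finFourEquivProd (R : Type*) : (Fin 4 → R) ≃ R × R × R × R where
  toFun v := (v 0, v 1, v 2, v 3)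
  invFun p := ![p.1, p.2.1, p.2.2.1, p.2.2.2]
  left_inv v := by ext i; fin_cases i <;> rfl
  right_inv _ := rfl

def legendreMap (s : ℝ) (v : ℝ × ℝ × ℝ × ℝ) : ℝ × ℝ × ℝ × ℝ :=
  (-s * v.2.2.2, v.2.2.1 - (1 - s) * v.2.1, v.2.1 - (1 - s) * v.2.2.1, -s * v.1)

theorem legendreMap_comp_finFourEquivProd (s : ℝ) :
    legendreMap s ∘ finFourEquivProd ℝ = finFourEquivProd ℝ ∘ (legendreMatrix s).mulVec := by
  ext v <;> simp only [Function.comp_apply, legendreMap, finFourEquivProd_apply, legendreMatrix,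
    Matrix.cons_mulVec, Matrix.empty_mulVec, dotProduct, Fin.sum_univ_four, Matrix.cons_val] <;> ring

theorem legendreMap_bijective_iff (s : ℝ) :
    Function.Bijective (legendreMap s) ↔ (legendreMatrix s).det ≠ 0 := by
  rw [← isUnit_iff_ne_zero, ← Matrix.mulVec_bijective_iff_isUnit_det,
    ← (finFourEquivProd ℝ).comp_bijective, ← legendreMap_comp_finFourEquivProd,
    (finFourEquivProd ℝ).bijective_comp]

theorem det_legendreMatrix (s : ℝ) : (legendreMatrix s).det = (2 - s) * s ^ 3 := by
  simp [legendreMatrix, Matrix.det_succ_row_zero, Fin.sum_univ_succ, Fin.succAbove]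
  ring

/-- The determinant of the 2D Maxwell Legendre matrix is `(2−ς)·ς³`; in particular the
Legendre map `(v₁₁,v₁₂,v₂₁,v₂₂) ↦ (−ς·v₂₂, v₂₁−(1−ς)·v₁₂, v₁₂−(1−ς)·v₂₁, −ς·v₁₁)` is
bijective (the Legendre correspondence is non-degenerate) iff `ς ≠ 0` and `ς ≠ 2`. -/
theorem legendre_determinant (s : ℝ) :
    (legendreMatrix s).det = (2 - s) * s ^ 3 ∧
      (Function.Bijective (fun v : ℝ × ℝ × ℝ × ℝ =>
          ((-s * v.2.2.2, v.2.2.1 - (1 - s) * v.2.1,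
            v.2.1 - (1 - s) * v.2.2.1, -s * v.1) : ℝ × ℝ × ℝ × ℝ)) ↔
        (s ≠ 0 ∧ s ≠ 2)) := by
  refine ⟨det_legendreMatrix s, ?_⟩
  change Function.Bijective (legendreMap s) ↔ _
  rw [legendreMap_bijective_iff, det_legendreMatrix, mul_ne_zero_iff,
    pow_ne_zero_iff three_ne_zero, sub_ne_zero, and_comm]
  exact and_congr_right' ne_comm
end
end

section
/- Let W₂ := (Fin 2 → ℝ) × (Fin 2 → ℝ) × ℝ × (ℝ × ℝ) be the two-dimensional Maxwell multisymplectic space, with points (x, A, 𝔢, (π¹², π²¹)) and coordinate 1-forms dx¹, dx², dA₁, dA₂, d𝔢, dπ¹², dπ²¹. Define the 3-form Ω₂ := d𝔢∧dx¹∧dx² + dπ¹²∧dA₁∧dy₂ + dπ²¹∧dA₂∧dy₁, with dy₁ := dx², dy₂ := −dx¹, and the 2-form κ := ½·(dπ²¹ − dπ¹²)∧dA₁ (the exterior differential of the 1-form ρ₁ = A₁·(π-part)). Then there exist vectors X₁, X₂, X̄₁, X̄₂ ∈ W₂, each of the admissible form X_α = (e_α, θ_α, u_α, (c_α, −c_α))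 (x-component the α-th standard basis vector of Fin 2 → ℝ, arbitrary A-component θ_α ∈ Fin 2 → ℝ, arbitrary 𝔢-component u_α ∈ ℝ, and π-component proportional to (1, −1)), such that Ω₂(X₁, X₂, w) = Ω₂(X̄₁, X̄₂, w) for every w ∈ W₂, but κ(X₁, X₂) ≠ κ(X̄₁, X̄₂). -/
noncomputable section

/-- The two-dimensional Maxwell multisymplectic space, with points
`(x, A, 𝔢, (π¹², π²¹))`. -/
abbrev W2 : Type := (Fin 2 → ℝ) × (Fin 2 → ℝ) × ℝ × (ℝ × ℝ)

/-- The coordinate 1-form `dx^μ` on `W2` (index `0` stands for the label `1`,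
index `1` for the label `2`). -/
def dx2 (μ : Fin 2) (w : W2) : ℝ := w.1 μ

/-- The coordinate 1-form `dA_μ` on `W2`. -/
def dA2 (μ : Fin 2) (w : W2) : ℝ := w.2.1 μ

/-- The coordinate 1-form `d𝔢` on `W2`. -/
def de2 (w : W2) : ℝ := w.2.2.1

/-- The coordinate 1-form `dπ¹²` on `W2`. -/
def dp12 (w : W2) : ℝ := w.2.2.2.1

/-- The coordinate 1-form `dπ²¹` on `W2`. -/
def dp21 (w : W2) : ℝ := w.2.2.2.2

/-- `dy₁ := dx²`. -/
def dy1 (w : W2) : ℝ := w.1 1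

/-- `dy₂ := −dx¹`. -/
def dy2 (w : W2) : ℝ := -(w.1 0)

/-- Wedge of three 1-forms: `(α∧β∧γ)(u,v,w) = det` of the evaluation matrix. -/
def wedge3 (α β γ : W2 → ℝ) (u v w : W2) : ℝ :=
  α u * (β v * γ w - β w * γ v) - α v * (β u * γ w - β w * γ u)
    + α w * (β u * γ v - β v * γ u)

/-- The 3-form `Ω₂ = d𝔢∧dx¹∧dx² + dπ¹²∧dA₁∧dy₂ + dπ²¹∧dA₂∧dy₁`. -/
def Omega2 (u v w : W2) : ℝ :=
  wedge3 de2 (dx2 0) (dx2 1) u v w + wedge3 dp12 (dA2 0) dy2 u v w +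
    wedge3 dp21 (dA2 1) dy1 u v w

/-- The 2-form `κ = ½·(dπ²¹ − dπ¹²)∧dA₁` (the exterior differential of the 1-form
`ρ₁ = A₁·(π-part)`). -/
def kappa (u v : W2) : ℝ :=
  (1/2) * ((dp21 u - dp12 u) * dA2 0 v - (dp21 v - dp12 v) * dA2 0 u)

/-- The obstruction showing that the forms `dA_μ` cannot be included in a copolarization
of the Maxwell multisymplectic manifold: there are admissible 2-vectors `X₁∧X₂` and
`X̄₁∧X̄₂` with the same contraction `⌟Ω₂` but different values of `κ = dρ₁`. -/
theorem copolarization_obstruction :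
    ∃ (θ1 θ2 θ1' θ2' : Fin 2 → ℝ) (u1 u2 u1' u2' c1 c2 c1' c2' : ℝ),
      (∀ w : W2,
        Omega2 ((Pi.single 0 1 : Fin 2 → ℝ), θ1, u1, (c1, -c1))
               ((Pi.single 1 1 : Fin 2 → ℝ), θ2, u2, (c2, -c2)) w =
        Omega2 ((Pi.single 0 1 : Fin 2 → ℝ), θ1', u1', (c1', -c1'))
               ((Pi.single 1 1 : Fin 2 → ℝ), θ2', u2', (c2', -c2')) w) ∧
      kappa ((Pi.single 0 1 : Fin 2 → ℝ), θ1, u1, (c1, -c1))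
            ((Pi.single 1 1 : Fin 2 → ℝ), θ2, u2, (c2, -c2)) ≠
      kappa ((Pi.single 0 1 : Fin 2 → ℝ), θ1', u1', (c1', -c1'))
            ((Pi.single 1 1 : Fin 2 → ℝ), θ2', u2', (c2', -c2')) := by
  refine ⟨0, 0, Pi.single 0 1, 0, 0, 0, 1, 0, 0, 1, 0, 1, ?_, ?_⟩
  · intro w
    simp [Omega2, wedge3, de2, dx2, dA2, dy1, dy2, dp12, dp21, Pi.single_apply]
    ring
  · simp [kappa, dp12, dp21, dA2, Pi.single_apply]
end
end
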